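/- arXiv:math/0608191 — 4 statements merged into one kernel-verified Lean document; each statement's English description precedes it below -/
import Mathlib

section
/- Let k be a field of characteristic ≠ 2, let (V, ⟨·|·⟩) be a two-dimensional k-vector space with a nonzero alternating bilinear form, let s be a Lie algebra and T an s-module. Suppose g = (sp(V) ⊕ s) ⊕ (V ⊗ T) is a ℤ₂-graded Lie algebra with even part sp(V) ⊕ s (with sp(V) and s commuting) and odd part V ⊗ T, where sp(V) acts on V ⊗ T through the factor V, s acts through the factor T, and the bracket of two odd elements has the form [u ⊗ x, v ⊗ y] = (x|y)γ_{u,v} + ⟨u|v⟩ d_{x,y} for a bilinear form (·|·) : T × T → k and a bilinear map d : T × T → s, where γ_{u,v} = ⟨u|·⟩v + ⟨v|·⟩u ∈ sp(V). If (·|·) is not identically zero, then (·|·) is alternating, d is symmetric, T equipped with the triple product [xyz] := d_{x,y}·z (the action of d_{x,y} ∈ s on z ∈ T) is a symplectic triple system, and the image of s in gl(T) under the representation is contained in der T and contains inder T. -/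
/-!
Fix `u, v ∈ V` with `⟨u|v⟩ ≠ 0`. Every claim is a component of anticommutativity or of the
Jacobi identity of `g` on a few elements of the form `u ⊗ x`, `v ⊗ y`, `l ∈ s`:
`[u ⊗ x, v ⊗ y] = -[v ⊗ y, u ⊗ x]` gives `(x|y) = -(y|x)` and `d_{x,y} = d_{y,x}`, since
`γ_{u,v} ≠ 0`; the Jacobi identity for `(l, u ⊗ x, v ⊗ y)` gives `(l·x|y) = (l·y|x)` and
`[l, d_{x,y}] = d_{l·x,y} + d_{x,l·y}`, so `s` acts by derivations; and the Jacobi identity for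
`(v ⊗ x, u ⊗ y, u ⊗ z)` lies in `u ⊗ T`, where it is axiom (b) of a symplectic triple system.
Axiom (c) is the derivation property for `l = d_{x,y}`, and (d) follows from
`(l·x|y) = (l·y|x)` and antisymmetry.
-/

open scoped TensorProduct

attribute [local instance 100] LieRing.ofAssociativeRing

noncomputable section

variable {k : Type*} [Field k] {V : Type*} [AddCommGroup V] [Module k V]

/-- `γ_{u,v} = ⟨u|·⟩v + ⟨v|·⟩u ∈ sp(V)`. -/
def gam (om : V →ₗ[k] V →ₗ[k] k) (u v : V) : Module.End k V :=
  (om u).smulRight v + (om v).smulRight u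

/-- The symplectic Lie algebra `sp(V)` of the alternating form `⟨·|·⟩`, as a submodule
of `End_k(V)` (it is a Lie subalgebra). -/
def spSet (om : V →ₗ[k] V →ₗ[k] k) : Submodule k (Module.End k V) where
  carrier := {f | ∀ u w, om (f u) w + om u (f w) = 0}
  add_mem' := by
    intro f g hf hg u w
    simp only [Set.mem_setOf_eq, LinearMap.add_apply, map_add] at *
    linear_combination hf u w + hg u w
  zero_mem' := by intro u w; simp
  smul_mem' := by
    intro c f hf u w
    simp only [Set.mem_setOf_eq, LinearMap.smul_apply, map_smul, smul_eq_mul] at *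
    linear_combination c * hf u w

end

open TensorProduct

section Gamma

variable {k V : Type*} [Field k] [AddCommGroup V] [Module k V] {om : V →ₗ[k] V →ₗ[k] k}

theorem gam_apply (u v w : V) : gam om u v w = om u w • v + om v w • u := rfl

theorem gam_comm (u v : V) : gam om u v = gam om v u := add_comm _ _

theorem gam_mem_spSet (hom : om.IsAlt) (u v : V) : gam om u v ∈ spSet om := by
  intro z w
  simp only [gam_apply, map_add, map_smul, LinearMap.add_apply, LinearMap.smul_apply,
    smul_eq_mul, ← hom.neg z]
  ring

theorem gam_ne_zero (hom : om.IsAlt) {u v : V} (huv : om u v ≠ 0) : gam om u v ≠ 0 := by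
  have hv : v ≠ 0 := by rintro rfl; simp at huv
  intro h
  have := LinearMap.congr_fun h v
  rw [gam_apply, hom.self_eq_zero, zero_smul, add_zero, LinearMap.zero_apply] at this
  exact hv ((smul_eq_zero.mp this).resolve_left huv)

end Gamma

theorem TensorProduct.eq_zero_of_tmul_eq_zero {k V T : Type*} [Field k] [AddCommGroup V]
    [Module k V] [AddCommGroup T] [Module k T] {u : V} {t : T} (hu : u ≠ 0)
    (h : u ⊗ₜ[k] t = 0) : t = 0 := by
  obtain ⟨φ, hφ⟩ : ∃ φ : Module.Dual k V, φ u ≠ 0 := by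
    by_contra! h'
    exact hu ((Module.forall_dual_apply_eq_zero_iff k u).mp h')
  have := congrArg (lift ((LinearMap.lsmul k T).comp φ)) h
  rw [lift.tmul, map_zero] at this
  exact (smul_eq_zero.mp this).resolve_left hφ

def jacobiator {k M : Type*} [CommRing k] [AddCommGroup M] [Module k M]
    (br : M →ₗ[k] M →ₗ[k] M) (a b c : M) : M :=
  br (br a b) c + br (br b c) a + br (br c a) b

section GradedBracket

variable {k V T L : Type*} [Field k] [AddCommGroup V] [Module k V] [AddCommGroup T]
  [Module k T] [LieRing L] [LieAlgebra k L] (om : V →ₗ[k] V →ₗ[k] k)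
  (ρ : L →ₗ⁅k⁆ Module.End k T) (B : T →ₗ[k] T →ₗ[k] k) (dd : T →ₗ[k] T →ₗ[k] L)
  (br : (Module.End k V × L) × (V ⊗[k] T) →ₗ[k] (Module.End k V × L) × (V ⊗[k] T) →ₗ[k]
    (Module.End k V × L) × (V ⊗[k] T))

abbrev IsEvenBracket : Prop :=
  ∀ f₁ ∈ spSet om, ∀ f₂ ∈ spSet om, ∀ l₁ l₂ : L,
    br ((f₁, l₁), 0) ((f₂, l₂), 0) = ((⁅f₁, f₂⁆, ⁅l₁, l₂⁆), 0)

abbrev IsTensorAction : Prop :=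
  ∀ f ∈ spSet om, ∀ (l : L) (u : V) (x : T),
    br ((f, l), 0) (0, u ⊗ₜ x) = (0, f u ⊗ₜ x + u ⊗ₜ ρ l x)

abbrev IsOddBracket : Prop :=
  ∀ (u : V) (x : T) (v : V) (y : T),
    br (0, u ⊗ₜ x) (0, v ⊗ₜ y) = ((B x y • gam om u v, om u v • dd x y), 0)

variable {om ρ B dd br}

theorem br_br_odd_odd_odd (hom : om.IsAlt)
    (hbr2 : IsTensorAction om ρ br)
    (hbr4 : IsOddBracket om B dd br)
    (u v w : V) (x y z : T) :
    br (br (0, u ⊗ₜ x) (0, v ⊗ₜ y)) (0, w ⊗ₜ z) =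
      (0, (B x y • gam om u v) w ⊗ₜ z + w ⊗ₜ ρ (om u v • dd x y) z) := by
  rw [hbr4, hbr2 _ (Submodule.smul_mem _ _ (gam_mem_spSet hom u v))]

theorem jacobiator_odd_tmul (hom : om.IsAlt)
    (hbr2 : IsTensorAction om ρ br)
    (hbr4 : IsOddBracket om B dd br)
    (u v : V) (x y z : T) :
    jacobiator br (0, v ⊗ₜ x) (0, u ⊗ₜ y) (0, u ⊗ₜ z) =
      (0, om v u • u ⊗ₜ
        (ρ (dd x y) z - ρ (dd z x) y + B x y • z - (2 * B y z) • x + B z x • y)) := by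
  simp only [jacobiator, br_br_odd_odd_odd hom hbr2 hbr4, LinearMap.smul_apply, gam_apply,
    hom.self_eq_zero, ← hom.neg v u, map_smul, Prod.mk_add_mk, add_zero, tmul_add, tmul_sub,
    add_tmul, tmul_smul, ← smul_tmul']
  congr 1
  module

theorem jacobiator_even_odd_tmul
    (hbr1 : IsEvenBracket om br)
    (hbr2 : IsTensorAction om ρ br)
    (hbr4 : IsOddBracket om B dd br)
    (hanti : ∀ (l : L) (s : V ⊗[k] T), br (0, s) ((0, l), 0) = -br ((0, l), 0) (0, s))
    (hom : om.IsAlt) (l : L) (u v : V) (x y : T) :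
    jacobiator br ((0, l), 0) (0, u ⊗ₜ x) (0, v ⊗ₜ y) =
      (((B (ρ l x) y - B (ρ l y) x) • gam om u v,
        om u v • (dd (ρ l x) y + dd (ρ l y) x - ⁅l, dd x y⁆)), 0) := by
  have hact : ∀ (w : V) (z : T), br ((0, l), 0) (0, w ⊗ₜ z) = (0, w ⊗ₜ ρ l z) := fun w z => by
    rw [hbr2 0 (zero_mem _), LinearMap.zero_apply, zero_tmul, zero_add]
  simp only [jacobiator, hact, hanti, hbr4, map_neg, LinearMap.neg_apply,
    hbr1 _ (Submodule.smul_mem _ _ (gam_mem_spSet hom u v)) 0 (zero_mem _), lie_zero,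
    gam_comm v u, ← hom.neg u v, smul_lie, ← lie_skew l]
  simp only [Prod.ext_iff, Prod.fst_add, Prod.snd_add, Prod.fst_neg, Prod.snd_neg,
    add_zero, neg_zero, and_true]
  constructor <;> module

theorem form_action_comm (hom : om.IsAlt) {u v : V} (huv : om u v ≠ 0)
    (hbr1 : IsEvenBracket om br)
    (hbr2 : IsTensorAction om ρ br)
    (hbr4 : IsOddBracket om B dd br)
    (hanti : ∀ (l : L) (s : V ⊗[k] T), br (0, s) ((0, l), 0) = -br ((0, l), 0) (0, s))
    {l : L} {x y : T} (hjac : jacobiator br ((0, l), 0) (0, u ⊗ₜ x) (0, v ⊗ₜ y) = 0) :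
    B (ρ l x) y = B (ρ l y) x := by
  rw [jacobiator_even_odd_tmul hbr1 hbr2 hbr4 hanti hom] at hjac
  have := congrArg (·.1.1) hjac
  exact sub_eq_zero.mp ((smul_eq_zero.mp this).resolve_right (gam_ne_zero hom huv))

theorem lie_dd (hom : om.IsAlt) {u v : V} (huv : om u v ≠ 0)
    (hbr1 : IsEvenBracket om br)
    (hbr2 : IsTensorAction om ρ br)
    (hbr4 : IsOddBracket om B dd br)
    (hanti : ∀ (l : L) (s : V ⊗[k] T), br (0, s) ((0, l), 0) = -br ((0, l), 0) (0, s))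
    {l : L} {x y : T} (hjac : jacobiator br ((0, l), 0) (0, u ⊗ₜ x) (0, v ⊗ₜ y) = 0) :
    ⁅l, dd x y⁆ = dd (ρ l x) y + dd (ρ l y) x := by
  rw [jacobiator_even_odd_tmul hbr1 hbr2 hbr4 hanti hom] at hjac
  have := congrArg (·.1.2) hjac
  exact (sub_eq_zero.mp ((smul_eq_zero.mp this).resolve_left huv)).symm

theorem form_antisymm (hom : om.IsAlt) {u v : V} (huv : om u v ≠ 0)
    (hbr4 : IsOddBracket om B dd br)
    {x y : T} (hanti : br (0, u ⊗ₜ x) (0, v ⊗ₜ y) = -br (0, v ⊗ₜ y) (0, u ⊗ₜ x)) :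
    B x y = -B y x := by
  rw [hbr4, hbr4, gam_comm v u] at hanti
  have h := congrArg (·.1.1) hanti
  simp only [Prod.fst_neg] at h
  rw [← neg_smul, ← sub_eq_zero, ← sub_smul, sub_neg_eq_add] at h
  exact eq_neg_iff_add_eq_zero.mpr ((smul_eq_zero.mp h).resolve_right (gam_ne_zero hom huv))

theorem dd_symm (hom : om.IsAlt) {u v : V} (huv : om u v ≠ 0)
    (hbr4 : IsOddBracket om B dd br)
    {x y : T} (hanti : br (0, u ⊗ₜ x) (0, v ⊗ₜ y) = -br (0, v ⊗ₜ y) (0, u ⊗ₜ x)) :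
    dd x y = dd y x := by
  rw [hbr4, hbr4, ← hom.neg u v] at hanti
  have h := congrArg (·.1.2) hanti
  simp only [Prod.fst_neg, Prod.snd_neg, neg_smul, neg_neg] at h
  exact smul_right_injective L huv h

theorem dd_apply_sub_dd_apply (hom : om.IsAlt) {u v : V} (huv : om u v ≠ 0)
    (hbr2 : IsTensorAction om ρ br)
    (hbr4 : IsOddBracket om B dd br)
    {x y z : T} (hjac : jacobiator br (0, v ⊗ₜ x) (0, u ⊗ₜ y) (0, u ⊗ₜ z) = 0) :
    ρ (dd x y) z - ρ (dd z x) y = (2 * B y z) • x - B x y • z - B z x • y := by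
  rw [jacobiator_odd_tmul hom hbr2 hbr4] at hjac
  have hvu : om v u ≠ 0 := by rw [← hom.neg]; exact neg_ne_zero.mpr huv
  have hu : u ≠ 0 := by rintro rfl; simp at huv
  have h := eq_zero_of_tmul_eq_zero hu ((smul_eq_zero.mp (congrArg Prod.snd hjac)).resolve_left hvu)
  linear_combination (norm := module) h

end GradedBracket

theorem LieHom.apply_apply_eq_apply_lie_add {k L T : Type*} [CommRing k] [LieRing L]
    [LieAlgebra k L] [AddCommGroup T] [Module k T] (ρ : L →ₗ⁅k⁆ Module.End k T) (l a : L)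
    (z : T) : ρ l (ρ a z) = ρ ⁅l, a⁆ z + ρ a (ρ l z) := by
  rw [LieHom.map_lie, Ring.lie_def, LinearMap.sub_apply, Module.End.mul_apply,
    Module.End.mul_apply, sub_add_cancel]

theorem stmt_2_general {k : Type*} [Field k]
    {V : Type*} [AddCommGroup V] [Module k V]
    {T : Type*} [AddCommGroup T] [Module k T]
    {L : Type*} [LieRing L] [LieAlgebra k L]
    (hchar : (2 : k) ≠ 0)
    -- V is 2-dimensional with a nonzero alternating form:
    (om : V →ₗ[k] V →ₗ[k] k) (homalt : ∀ v, om v v = 0) (homne : om ≠ 0)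
    -- T is a module for the Lie algebra s (= L), via ρ:
    (ρ : L →ₗ⁅k⁆ Module.End k T)
    -- the bracket of the ℤ₂-graded Lie algebra g = (sp(V) ⊕ s) ⊕ (V ⊗ T):
    (br : ((Module.End k V × L) × (V ⊗[k] T)) →ₗ[k]
      ((Module.End k V × L) × (V ⊗[k] T)) →ₗ[k]
      ((Module.End k V × L) × (V ⊗[k] T)))
    -- g is a Lie algebra:
    (hanti : ∀ a ∈ ((spSet om).prod ⊤).prod (⊤ : Submodule k (V ⊗[k] T)),
      ∀ b ∈ ((spSet om).prod ⊤).prod (⊤ : Submodule k (V ⊗[k] T)),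
        br a b = - br b a)
    (hjac : ∀ a ∈ ((spSet om).prod ⊤).prod (⊤ : Submodule k (V ⊗[k] T)),
      ∀ b ∈ ((spSet om).prod ⊤).prod (⊤ : Submodule k (V ⊗[k] T)),
        ∀ c ∈ ((spSet om).prod ⊤).prod (⊤ : Submodule k (V ⊗[k] T)),
          br (br a b) c + br (br b c) a + br (br c a) b = 0)
    -- sp(V) ⊕ s is the even part, with sp(V) and s commuting:
    (hbr1 : ∀ f₁ ∈ spSet om, ∀ f₂ ∈ spSet om, ∀ l₁ l₂ : L,
      br ((f₁, l₁), 0) ((f₂, l₂), 0) = ((⁅f₁, f₂⁆, ⁅l₁, l₂⁆), 0))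
    -- the even part acts on V ⊗ T through V and through T respectively:
    (hbr2 : ∀ f ∈ spSet om, ∀ (l : L) (u : V) (x : T),
      br ((f, l), 0) (0, u ⊗ₜ x) = (0, f u ⊗ₜ x + u ⊗ₜ ρ l x))
    -- the bracket of two odd elements has the prescribed form:
    (B : T →ₗ[k] T →ₗ[k] k) (dd : T →ₗ[k] T →ₗ[k] L)
    (hbr4 : ∀ (u : V) (x : T) (v : V) (y : T),
      br (0, u ⊗ₜ x) (0, v ⊗ₜ y) = ((B x y • gam om u v, om u v • dd x y), 0)) :
    -- then (·|·) is alternating,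
    (∀ x, B x x = 0) ∧
    -- d is symmetric,
    (∀ x y, dd x y = dd y x) ∧
    -- T with [xyz] := ρ(d_{x,y})(z) is a symplectic triple system:
    (∀ x y z, ρ (dd x y) z = ρ (dd y x) z) ∧
    (∀ x y z, ρ (dd x y) z - ρ (dd x z) y
      = B x z • y - B x y • z + (2 * B y z) • x) ∧
    (∀ x y u v w, ρ (dd x y) (ρ (dd u v) w) =
      ρ (dd (ρ (dd x y) u) v) w + ρ (dd u (ρ (dd x y) v)) w + ρ (dd u v) (ρ (dd x y) w)) ∧
    (∀ x y u v, B (ρ (dd x y) u) v + B u (ρ (dd x y) v) = 0) ∧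
    -- the image of s in gl(T) consists of derivations of T:
    (∀ l : L, ∀ x y z, ρ l (ρ (dd x y) z)
      = ρ (dd (ρ l x) y) z + ρ (dd x (ρ l y)) z + ρ (dd x y) (ρ l z)) ∧
    -- and contains inder T:
    Submodule.span k {f : Module.End k T | ∃ x y, f = ρ (dd x y)}
      ≤ LinearMap.range ρ.toLinearMap := by
  have hom : om.IsAlt := homalt
  obtain ⟨u, v, huv⟩ : ∃ u v, om u v ≠ 0 := by
    by_contra! h
    exact homne (LinearMap.ext₂ h)
  have hodd (t : V ⊗[k] T) : ((0, t) : (Module.End k V × L) × (V ⊗[k] T)) ∈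
      ((spSet om).prod ⊤).prod ⊤ := ⟨zero_mem _, trivial⟩
  have heven (l : L) : (((0, l), 0) : (Module.End k V × L) × (V ⊗[k] T)) ∈
      ((spSet om).prod ⊤).prod ⊤ := ⟨⟨zero_mem _, trivial⟩, trivial⟩
  have hanti_even (l : L) (t : V ⊗[k] T) := hanti _ (hodd t) _ (heven l)
  have hB (x y : T) : B x y = -B y x := form_antisymm hom huv hbr4 (hanti _ (hodd _) _ (hodd _))
  have hdd (x y : T) : dd x y = dd y x := dd_symm hom huv hbr4 (hanti _ (hodd _) _ (hodd _))
  have hder (l : L) (x y z : T) : ρ l (ρ (dd x y) z)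
      = ρ (dd (ρ l x) y) z + ρ (dd x (ρ l y)) z + ρ (dd x y) (ρ l z) := by
    rw [LieHom.apply_apply_eq_apply_lie_add, lie_dd hom huv hbr1 hbr2 hbr4 hanti_even
      (hjac _ (heven l) _ (hodd _) _ (hodd _)), hdd (ρ l y), map_add, LinearMap.add_apply]
  refine ⟨fun x => ?_, hdd, fun x y z => by rw [hdd x y], fun x y z => ?_,
    fun x y _ _ _ => hder _ _ _ _, fun x y u' v' => ?_, hder, ?_⟩
  · have h2 : 2 * B x x = 0 := by linear_combination hB x x
    exact (mul_eq_zero.mp h2).resolve_left hchar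
  · rw [hdd x z, dd_apply_sub_dd_apply hom huv hbr2 hbr4 (hjac _ (hodd _) _ (hodd _) _ (hodd _)),
      hB z x]
    module
  · linear_combination form_action_comm (l := dd x y) (x := u') (y := v') hom huv hbr1 hbr2
      hbr4 hanti_even (hjac _ (heven _) _ (hodd _) _ (hodd _)) + hB u' (ρ (dd x y) v')
  · exact Submodule.span_le.mpr fun _ ⟨x, y, hf⟩ => ⟨dd x y, hf.symm⟩

/-- (Converse construction.)  Suppose
`g = (sp(V) ⊕ s) ⊕ (V ⊗ T)` is a ℤ₂-graded Lie algebra, where `s` is a Lie algebra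
acting on `T` through a representation `ρ`, `sp(V)` acts on `V ⊗ T` through `V`, `s`
acts through `T`, and the bracket of two odd elements is
`[u ⊗ x, v ⊗ y] = (x|y)γ_{u,v} + ⟨u|v⟩ d_{x,y}` for a bilinear form `(·|·)` on `T` and
a bilinear map `d : T × T → s`.  If `(·|·) ≠ 0`, then `(·|·)` is alternating, `d` is
symmetric, `T` with `[xyz] := ρ(d_{x,y})(z)` is a symplectic triple system, and the
image of `s` in `gl(T)` consists of derivations of `T` and contains `inder T`. -/
theorem stmt_2 {k : Type*} [Field k]
    {V : Type*} [AddCommGroup V] [Module k V]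
    {T : Type*} [AddCommGroup T] [Module k T]
    {L : Type*} [LieRing L] [LieAlgebra k L]
    (hchar : (2 : k) ≠ 0)
    -- V is 2-dimensional with a nonzero alternating form:
    (om : V →ₗ[k] V →ₗ[k] k) (homalt : ∀ v, om v v = 0) (homne : om ≠ 0)
    (hdimV : Module.finrank k V = 2)
    -- T is a module for the Lie algebra s (= L), via ρ:
    (ρ : L →ₗ⁅k⁆ Module.End k T)
    -- the bracket of the ℤ₂-graded Lie algebra g = (sp(V) ⊕ s) ⊕ (V ⊗ T):
    (br : ((Module.End k V × L) × (V ⊗[k] T)) →ₗ[k]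
      ((Module.End k V × L) × (V ⊗[k] T)) →ₗ[k]
      ((Module.End k V × L) × (V ⊗[k] T)))
    -- g is a Lie algebra:
    (hclosed : ∀ a ∈ ((spSet om).prod ⊤).prod (⊤ : Submodule k (V ⊗[k] T)),
      ∀ b ∈ ((spSet om).prod ⊤).prod (⊤ : Submodule k (V ⊗[k] T)),
        br a b ∈ ((spSet om).prod ⊤).prod (⊤ : Submodule k (V ⊗[k] T)))
    (hanti : ∀ a ∈ ((spSet om).prod ⊤).prod (⊤ : Submodule k (V ⊗[k] T)),
      ∀ b ∈ ((spSet om).prod ⊤).prod (⊤ : Submodule k (V ⊗[k] T)),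
        br a b = - br b a)
    (hjac : ∀ a ∈ ((spSet om).prod ⊤).prod (⊤ : Submodule k (V ⊗[k] T)),
      ∀ b ∈ ((spSet om).prod ⊤).prod (⊤ : Submodule k (V ⊗[k] T)),
        ∀ c ∈ ((spSet om).prod ⊤).prod (⊤ : Submodule k (V ⊗[k] T)),
          br (br a b) c + br (br b c) a + br (br c a) b = 0)
    -- sp(V) ⊕ s is the even part, with sp(V) and s commuting:
    (hbr1 : ∀ f₁ ∈ spSet om, ∀ f₂ ∈ spSet om, ∀ l₁ l₂ : L,
      br ((f₁, l₁), 0) ((f₂, l₂), 0) = ((⁅f₁, f₂⁆, ⁅l₁, l₂⁆), 0))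
    -- the even part acts on V ⊗ T through V and through T respectively:
    (hbr2 : ∀ f ∈ spSet om, ∀ (l : L) (u : V) (x : T),
      br ((f, l), 0) (0, u ⊗ₜ x) = (0, f u ⊗ₜ x + u ⊗ₜ ρ l x))
    -- the bracket of two odd elements has the prescribed form:
    (B : T →ₗ[k] T →ₗ[k] k) (dd : T →ₗ[k] T →ₗ[k] L)
    (hbr4 : ∀ (u : V) (x : T) (v : V) (y : T),
      br (0, u ⊗ₜ x) (0, v ⊗ₜ y) = ((B x y • gam om u v, om u v • dd x y), 0))
    -- and (·|·) is not identically zero: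
    (hBne : B ≠ 0) :
    -- then (·|·) is alternating,
    (∀ x, B x x = 0) ∧
    -- d is symmetric,
    (∀ x y, dd x y = dd y x) ∧
    -- T with [xyz] := ρ(d_{x,y})(z) is a symplectic triple system:
    (∀ x y z, ρ (dd x y) z = ρ (dd y x) z) ∧
    (∀ x y z, ρ (dd x y) z - ρ (dd x z) y
      = B x z • y - B x y • z + (2 * B y z) • x) ∧
    (∀ x y u v w, ρ (dd x y) (ρ (dd u v) w) =
      ρ (dd (ρ (dd x y) u) v) w + ρ (dd u (ρ (dd x y) v)) w + ρ (dd u v) (ρ (dd x y) w)) ∧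
    (∀ x y u v, B (ρ (dd x y) u) v + B u (ρ (dd x y) v) = 0) ∧
    -- the image of s in gl(T) consists of derivations of T:
    (∀ l : L, ∀ x y z, ρ l (ρ (dd x y) z)
      = ρ (dd (ρ l x) y) z + ρ (dd x (ρ l y)) z + ρ (dd x y) (ρ l z)) ∧
    -- and contains inder T:
    Submodule.span k {f : Module.End k T | ∃ x y, f = ρ (dd x y)}
      ≤ LinearMap.range ρ.toLinearMap :=
  stmt_2_general hchar om homalt homne ρ br hanti hjac hbr1 hbr2 B dd hbr4
end

section
/- Let T be an orthogonal triple system over a field k of characteristic ≠ 2 with dim_k T ≥ 2. Then every derivation d of T is skew with respect to the bilinear form: (d(x)|y) + (x|d(y)) = 0 for all x,y ∈ T; that is, der T is contained in the orthogonal Lie algebra so(T,(·|·)). -/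
/-! Differentiating the identity `[x y y] = (x|y) y - (y|y) x` along a derivation `d` and
linearizing `[x y y]` in its last two slots shows that the defect
`φ_y(x) = (d x|y) + (x|d y)` satisfies `φ_y(x) y = φ_y(y) x`. Choosing `x` independent of `y`,
which `dim T ≥ 2` allows, forces `φ_y(y) = 0`, hence `φ_y(x) y = 0` and `φ_y = 0`. -/

section TripleProduct

variable {R T : Type*} [CommRing R] [AddCommGroup T] [Module R T]
  (B : T →ₗ[R] T →ₗ[R] R) (P : T →ₗ[R] T →ₗ[R] T →ₗ[R] T)

theorem triple_add_triple_swap (hPb : ∀ x y, P x y y = B x y • y - B y y • x) (x y z : T) :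
    P x y z + P x z y = B x y • z + B x z • y - (B y z + B z y) • x := by
  have h := hPb x (y + z)
  simp only [map_add, LinearMap.add_apply] at h
  linear_combination (norm := module) h - hPb x y - hPb x z

theorem derivation_skewDefect_smul_comm (hPb : ∀ x y, P x y y = B x y • y - B y y • x)
    (d : Module.End R T) (hd : ∀ x y z, d (P x y z) = P (d x) y z + P x (d y) z + P x y (d z))
    (x y : T) : (B (d x) y + B x (d y)) • y = (B (d y) y + B y (d y)) • x := by
  have h := hd x y y
  rw [hPb x y, hPb (d x) y, map_sub, map_smul, map_smul] at h
  linear_combination (norm := module) -h - triple_add_triple_swap B P hPb x (d y) y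

end TripleProduct

theorem LinearMap.eq_zero_of_smul_comm {k V : Type*} [Field k] [AddCommGroup V] [Module k V]
    (hrank : 1 < Module.rank k V) (φ : V →ₗ[k] k) {y : V} (hy : y ≠ 0)
    (h : ∀ x, φ x • y = φ y • x) : φ = 0 := by
  obtain ⟨z, hyz⟩ := exists_linearIndependent_pair_of_one_lt_rank hrank hy
  have hφy : φ y = 0 := neg_eq_zero.mp
    (LinearIndependent.pair_iff.mp hyz (φ z) (-φ y) (by rw [h z, neg_smul, add_neg_cancel])).2
  ext x
  simpa [hφy, hy] using h x

theorem stmt_5_general {k T : Type*} [Field k] [AddCommGroup T] [Module k T]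
    (hdim : 2 ≤ Module.rank k T)
    (B : T →ₗ[k] T →ₗ[k] k) (P : T →ₗ[k] T →ₗ[k] T →ₗ[k] T)
    (hPb : ∀ x y, P x y y = B x y • y - B y y • x) :
    ∀ d : Module.End k T,
      (∀ x y z, d (P x y z) = P (d x) y z + P x (d y) z + P x y (d z)) →
      ∀ x y, B (d x) y + B x (d y) = 0 := by
  intro d hd x y
  rcases eq_or_ne y 0 with rfl | hy
  · simp
  have hφ : B.flip y ∘ₗ d + B.flip (d y) = 0 :=
    LinearMap.eq_zero_of_smul_comm (lt_of_lt_of_le (by norm_num) hdim) _ hy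
      (by simpa using (derivation_skewDefect_smul_comm B P hPb d hd · y))
  simpa using LinearMap.congr_fun hφ x

/-- If `T` is an orthogonal triple system over a field of characteristic ≠ 2
with `dim_k T ≥ 2`, then every derivation of `T` is skew with respect to the bilinear form,
i.e. `der T ⊆ so(T,(·|·))`. -/
theorem stmt_5 {k T : Type*} [Field k] [AddCommGroup T] [Module k T]
    (hchar : (2 : k) ≠ 0) (hdim : 2 ≤ Module.rank k T)
    (B : T →ₗ[k] T →ₗ[k] k) (P : T →ₗ[k] T →ₗ[k] T →ₗ[k] T)
    (hBsymm : ∀ x y, B x y = B y x) (hBne : B ≠ 0)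
    (hPa : ∀ x y, P x x y = 0)
    (hPb : ∀ x y, P x y y = B x y • y - B y y • x)
    (hPc : ∀ x y u v w, P x y (P u v w) =
      P (P x y u) v w + P u (P x y v) w + P u v (P x y w))
    (hPd : ∀ x y u v, B (P x y u) v + B u (P x y v) = 0) :
    ∀ d : Module.End k T,
      (∀ x y z, d (P x y z) = P (d x) y z + P x (d y) z + P x y (d z)) →
      ∀ x y, B (d x) y + B x (d y) = 0 :=
  stmt_5_general hdim B P hPb
end

section
/- Let C be a Hurwitz algebra over a field k of characteristic ≠ 2, S the associated para-Hurwitz algebra and J = H₃(C,*). For (d₀,d₁,d₂) ∈ tri(S), let D_{(d₀,d₁,d₂)} be the endomorphism of J with D_{(d₀,d₁,d₂)}(e_i) = 0 and D_{(d₀,d₁,d₂)}(ι_i(a)) = ι_i(d_i(a)) for i = 0,1,2 and a ∈ S. Then each D_{(d₀,d₁,d₂)} is a derivation of J, and the map (d₀,d₁,d₂) ↦ D_{(d₀,d₁,d₂)} is a Lie algebra isomorphism from tri(S) onto (der J)_{(0,0)}. -/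
noncomputable section

variable {k : Type*} [Field k] {C : Type*} [NonAssocRing C] [Module k C]
  [SMulCommClass k C C] [IsScalarTower k C C]

/-- The polar form of the norm of the Hurwitz algebra `C`. -/
def bp (q : QuadraticForm k C) (x y : C) : k := QuadraticMap.polar q x y

/-- The standard involution `x ↦ b(x,1)1 - x` of the Hurwitz algebra `C`. -/
def conj (q : QuadraticForm k C) (x : C) : C := bp q x 1 • (1 : C) - x

/-- The para-Hurwitz product `x • y = x̄ ȳ` on `C`. -/
def pmul (q : QuadraticForm k C) (x y : C) : C := conj q x * conj q y

/-- The underlying space of the Jordan algebra `J = H₃(C,*)`, identified with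
`k³ ⊕ S ⊕ S ⊕ S` via the diagonal coordinates and the maps `ι₀, ι₁, ι₂`. -/
abbrev Jtype (k C : Type*) := (Fin 3 → k) × (Fin 3 → C)

/-- The diagonal idempotents `e₀, e₁, e₂` of `J = H₃(C,*)`. -/
def ee (i : Fin 3) : Jtype k C := (Pi.single i 1, 0)

/-- The elements `ι_i(a)` of `J = H₃(C,*)`. -/
def iot (i : Fin 3) (a : C) : Jtype k C := (0, Pi.single i a)

/-- The Jordan product `x ∘ y = ½(xy + yx)` of `J = H₃(C,*)`, written in the
coordinates `J = k³ ⊕ S ⊕ S ⊕ S` (indices mod 3):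
`e_j ∘ e_j = e_j`, `e_j ∘ e_l = 0` for `j ≠ l`, `e_i ∘ ι_i(a) = 0`,
`e_{i+1} ∘ ι_i(a) = e_{i+2} ∘ ι_i(a) = ½ ι_i(a)`,
`ι_i(a) ∘ ι_{i+1}(b) = ι_{i+2}(a • b)`, and
`ι_i(a) ∘ ι_i(b) = 2 b(a,b) (e_{i+1} + e_{i+2})`. -/
def jmul (q : QuadraticForm k C) (x y : Jtype k C) : Jtype k C :=
  (fun j => x.1 j * y.1 j + 2 * bp q (x.2 (j+1)) (y.2 (j+1))
      + 2 * bp q (x.2 (j+2)) (y.2 (j+2)),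
   fun i => ((2:k)⁻¹ * (x.1 (i+1) + x.1 (i+2))) • y.2 i
      + ((2:k)⁻¹ * (y.1 (i+1) + y.1 (i+2))) • x.2 i
      + pmul q (x.2 (i+1)) (y.2 (i+2)) + pmul q (y.2 (i+1)) (x.2 (i+2)))

/-- Derivations of the Jordan algebra `J = H₃(C,*)`. -/
def IsDerivJ (q : QuadraticForm k C) (f : Jtype k C → Jtype k C) : Prop :=
  ∀ x y, f (jmul q x y) = jmul q (f x) y + jmul q x (f y)

/-- The submodule of `Fin 3 → C` of elements supported at the single index `i`. -/
def piComp (k C : Type*) [Field k] [AddCommGroup C] [Module k C] (i : Fin 3) :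
    Submodule k (Fin 3 → C) where
  carrier := {a | ∀ j, j ≠ i → a j = 0}
  add_mem' := by
    intro a b ha hb j hj
    simp [ha j hj, hb j hj]
  zero_mem' := by intro j hj; rfl
  smul_mem' := by
    intro c a ha j hj
    simp [ha j hj]

/-- The `ℤ₂ × ℤ₂`-grading of `J = H₃(C,*)`:
`J_{(0,0)} = k³`, `J_{(1,0)} = ι₀(S)`, `J_{(0,1)} = ι₁(S)`, `J_{(1,1)} = ι₂(S)`. -/
def Jgrade (k C : Type*) [Field k] [AddCommGroup C] [Module k C] :
    ZMod 2 × ZMod 2 → Submodule k (Jtype k C) := fun p =>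
  if p = (0,0) then (⊤ : Submodule k (Fin 3 → k)).prod (⊥ : Submodule k (Fin 3 → C))
  else if p = (1,0) then (⊥ : Submodule k (Fin 3 → k)).prod (piComp k C 0)
  else if p = (0,1) then (⊥ : Submodule k (Fin 3 → k)).prod (piComp k C 1)
  else (⊥ : Submodule k (Fin 3 → k)).prod (piComp k C 2)

end

noncomputable section

variable {k : Type*} [Field k] {C : Type*} [NonAssocRing C] [Module k C]
  [SMulCommClass k C C] [IsScalarTower k C C]

/-- The triality Lie algebra condition: `(d₀,d₁,d₂) ∈ so(S,b)³` with
`d₀(x • y) = d₁(x) • y + x • d₂(y)` for the para-Hurwitz product. -/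
def IsTri (q : QuadraticForm k C) (d : Fin 3 → Module.End k C) : Prop :=
  (∀ i : Fin 3, ∀ x y : C, bp q (d i x) y + bp q x (d i y) = 0) ∧
  (∀ x y : C, d 0 (pmul q x y) = pmul q (d 1 x) y + pmul q x (d 2 y))

/-- The endomorphism `D_{(d₀,d₁,d₂)}` of `J`, killing the `e_i` and acting by
`ι_i(a) ↦ ι_i(d_i(a))`. -/
def Dtri (d : Fin 3 → Module.End k C) : Module.End k (Jtype k C) where
  toFun x := (0, fun i => d i (x.2 i))
  map_add' x y := by
    refine Prod.ext ?_ ?_ <;> funext i <;> simp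
  map_smul' c x := by
    refine Prod.ext ?_ ?_ <;> funext i <;> simp

end

section AuxLemmas

set_option linter.unusedSectionVars false
set_option maxHeartbeats 1000000

variable {k : Type*} [Field k] {C : Type*} [NonAssocRing C] [Module k C]
  [SMulCommClass k C C] [IsScalarTower k C C] (q : QuadraticForm k C)

lemma bp_add_left' (x x' y : C) : bp q (x + x') y = bp q x y + bp q x' y :=
  QuadraticMap.polar_add_left q x x' y
lemma bp_add_right' (x y y' : C) : bp q x (y + y') = bp q x y + bp q x y' :=
  QuadraticMap.polar_add_right q x y y'
lemma bp_smul_left' (a : k) (x y : C) : bp q (a • x) y = a * bp q x y :=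
  QuadraticMap.polar_smul_left q a x y
lemma bp_sub_left' (x x' y : C) : bp q (x - x') y = bp q x y - bp q x' y :=
  QuadraticMap.polar_sub_left q x x' y
lemma bp_comm' (x y : C) : bp q x y = bp q y x := QuadraticMap.polar_comm q x y
lemma bp_zero_left' (y : C) : bp q 0 y = 0 := QuadraticMap.polar_zero_left q y
lemma bp_zero_right' (y : C) : bp q y 0 = 0 := QuadraticMap.polar_zero_right q y

lemma conj_zero' : conj q (0 : C) = 0 := by
  simp [conj, bp_zero_left']
lemma pmul_zero_left' (y : C) : pmul q 0 y = 0 := by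
  simp [pmul, conj_zero']
lemma pmul_zero_right' (y : C) : pmul q y 0 = 0 := by
  simp [pmul, conj_zero']

lemma pol_comp' (hcomp : ∀ x y : C, q (x * y) = q x * q y) (x w y : C) :
    bp q (x * y) (w * y) = bp q x w * q y := by
  have h : (x + w) * y = x * y + w * y := add_mul x w y
  simp only [bp, QuadraticMap.polar]
  rw [← h, hcomp, hcomp, hcomp]
  ring

lemma pol_comp2' (hcomp : ∀ x y : C, q (x * y) = q x * q y) (x w y z : C) :
    bp q (x * y) (w * z) + bp q (x * z) (w * y) = bp q x w * bp q y z := by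
  have h := pol_comp' q hcomp x w (y + z)
  rw [mul_add, mul_add, bp_add_left', bp_add_right', bp_add_right'] at h
  rw [pol_comp' q hcomp x w y, pol_comp' q hcomp x w z] at h
  have hq : q (y + z) = q y + q z + bp q y z := by
    simp [bp, QuadraticMap.polar]
  rw [hq] at h
  linear_combination h

lemma bmul1' (hcomp : ∀ x y : C, q (x * y) = q x * q y) (x y z : C) :
    bp q (x * y) z + bp q (x * z) y = bp q x 1 * bp q y z := by
  simpa using pol_comp2' q hcomp x 1 y z

lemma bmul2' (hcomp : ∀ x y : C, q (x * y) = q x * q y) (x y z : C) :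
    bp q (x * z) y + bp q x (y * z) = bp q x y * bp q z 1 := by
  simpa using pol_comp2' q hcomp x y z 1

lemma pmul_expand' (x y : C) :
    pmul q x y = (bp q x 1 * bp q y 1) • (1:C) - bp q x 1 • y - bp q y 1 • x + x * y := by
  simp only [pmul, conj, sub_mul, mul_sub, smul_mul_assoc, mul_smul_comm, smul_smul,
    one_mul, mul_one]
  module

lemma bp_pmul' (x y z : C) :
    bp q (pmul q x y) z = bp q x 1 * bp q y 1 * bp q 1 z
      - bp q x 1 * bp q y z - bp q y 1 * bp q x z + bp q (x * y) z := by
  rw [pmul_expand']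
  rw [bp_add_left', bp_sub_left', bp_sub_left', bp_smul_left', bp_smul_left', bp_smul_left']

lemma Tcyc' (hcomp : ∀ x y : C, q (x * y) = q x * q y) (x y z : C) :
    bp q (pmul q x y) z = bp q (pmul q y z) x := by
  rw [bp_pmul', bp_pmul']
  have h1 := bmul1' q hcomp x y z
  have h2 := bmul2' q hcomp x y z
  have c1 : bp q 1 z = bp q z 1 := bp_comm' q 1 z
  have c2 : bp q 1 x = bp q x 1 := bp_comm' q 1 x
  have c3 : bp q (y*z) x = bp q x (y*z) := bp_comm' q (y*z) x
  have c4 : bp q z x = bp q x z := bp_comm' q z x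
  have c5 : bp q y x = bp q x y := bp_comm' q y x
  linear_combination h1 - h2 + bp q x 1 * bp q y 1 * c1 - bp q y 1 * bp q z 1 * c2 - c3 + bp q y 1 * c4 + bp q z 1 * c5

lemma tri_rotate' (hcomp : ∀ x y : C, q (x * y) = q x * q y)
    (hreg : ∀ x : C, (∀ y, QuadraticMap.polar q x y = 0) → x = 0)
    (d : Fin 3 → Module.End k C) (h : IsTri q d) :
    IsTri q (fun i => d (i + 2)) := by
  obtain ⟨hskew, hmul⟩ := h
  refine ⟨fun i x y => hskew (i+2) x y, ?_⟩
  have R : ∀ x y z : C, bp q (pmul q (d 1 x) y) z + bp q (pmul q x (d 2 y)) z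
      + bp q (pmul q x y) (d 0 z) = 0 := by
    intro x y z
    have s0 := hskew 0 (pmul q x y) z
    rw [hmul x y, bp_add_left'] at s0
    linear_combination s0
  intro x y
  show d 2 (pmul q x y) = pmul q (d 0 x) y + pmul q x (d 1 y)
  have key : ∀ z, bp q (d 2 (pmul q x y) - (pmul q (d 0 x) y + pmul q x (d 1 y))) z = 0 := by
    intro z
    have r := R y z x
    have t1 := Tcyc' q hcomp x (d 1 y) z
    have t2 := Tcyc' q hcomp x y (d 2 z)
    have t3 := Tcyc' q hcomp (d 0 x) y z
    have s2 := hskew 2 (pmul q x y) z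
    rw [bp_sub_left', bp_add_left']
    linear_combination s2 - r - t1 - t2 - t3
  have h0 := hreg _ key
  rw [sub_eq_zero] at h0
  exact h0

lemma tri_cyc' (hcomp : ∀ x y : C, q (x * y) = q x * q y)
    (hreg : ∀ x : C, (∀ y, QuadraticMap.polar q x y = 0) → x = 0)
    (d : Fin 3 → Module.End k C) (h : IsTri q d) :
    ∀ (i : Fin 3) (x y : C),
      d i (pmul q x y) = pmul q (d (i+1) x) y + pmul q x (d (i+2) y) := by
  have h1 := tri_rotate' q hcomp hreg d h
  have h2 := tri_rotate' q hcomp hreg _ h1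
  intro i x y
  fin_cases i
  · simpa using h.2 x y
  · simpa using h2.2 x y
  · simpa using h1.2 x y

lemma Dtri_apply' (d : Fin 3 → Module.End k C) (x : Jtype k C) :
    Dtri d x = (0, fun i => d i (x.2 i)) := rfl

lemma mem_piComp' (i : Fin 3) (a : Fin 3 → C) :
    a ∈ piComp k C i ↔ ∀ j, j ≠ i → a j = 0 := Iff.rfl

lemma jmul_ee_self' (j : Fin 3) : jmul q (ee j) (ee j) = (ee j : Jtype k C) := by
  unfold jmul ee
  refine Prod.ext (funext fun l => ?_) (funext fun i => ?_)
  · simp only [Pi.zero_apply, bp_zero_left', Pi.single_apply]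
    split <;> simp
  · simp [pmul_zero_left']

lemma jmul_iot12' (a b : C) :
    jmul q (iot 1 a) (iot 2 b) = (iot 0 (pmul q a b) : Jtype k C) := by
  unfold jmul iot
  refine Prod.ext (funext fun l => ?_) (funext fun i => ?_)
  · fin_cases l <;>
      simp [Pi.single_apply, bp_zero_left', bp_zero_right']
  · fin_cases i <;>
      simp [Pi.single_apply, pmul_zero_left', pmul_zero_right']

lemma jmul_iot_same' (i : Fin 3) (a b : C) :
    jmul q (iot i a) (iot i b) = (2 * bp q a b) • (ee (i+1) + ee (i+2) : Jtype k C) := by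
  unfold jmul iot ee
  refine Prod.ext (funext fun l => ?_) (funext fun m => ?_)
  · fin_cases i <;> fin_cases l <;>
      simp [Pi.single_apply, bp_zero_left', bp_zero_right', bp_comm' q b a]
  · fin_cases i <;> fin_cases m <;>
      simp [Pi.single_apply, pmul_zero_left', pmul_zero_right']

lemma decomp' (x : Jtype k C) :
    x = x.1 0 • ee 0 + x.1 1 • ee 1 + x.1 2 • ee 2
      + iot 0 (x.2 0) + iot 1 (x.2 1) + iot 2 (x.2 2) := by
  refine Prod.ext (funext fun l => ?_) (funext fun m => ?_)
  · fin_cases l <;> simp [ee, iot, Pi.single_apply]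
  · fin_cases m <;> simp [ee, iot, Pi.single_apply]

lemma iot_add' (i : Fin 3) (a b : C) :
    (iot i (a + b) : Jtype k C) = iot i a + iot i b := by
  refine Prod.ext ?_ ?_ <;> simp [iot, Pi.single_add]

lemma iot_smul' (i : Fin 3) (c : k) (a : C) :
    (iot i (c • a) : Jtype k C) = c • iot i a := by
  refine Prod.ext ?_ ?_ <;> simp [iot, Pi.single_smul]

end AuxLemmas


set_option maxHeartbeats 2000000 in
/-- The map `(d₀,d₁,d₂) ↦ D_{(d₀,d₁,d₂)}` is a Lie algebra isomorphism
from `tri(S)` onto `(der J)_{(0,0)}`: each `D_{(d₀,d₁,d₂)}` is a derivation of `J` of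
degree `(0,0)`, the map is linear, injective, surjective onto `(der J)_{(0,0)}`, and
preserves brackets. -/
theorem stmt_7 {k : Type*} [Field k] {C : Type*} [NonAssocRing C] [Module k C]
    [SMulCommClass k C C] [IsScalarTower k C C]
    (hchar : (2 : k) ≠ 0)
    (q : QuadraticForm k C)
    (hcomp : ∀ x y : C, q (x * y) = q x * q y)
    (hreg : ∀ x : C, (∀ y, QuadraticMap.polar q x y = 0) → x = 0) :
    (∀ d : Fin 3 → Module.End k C, IsTri q d →
      (IsDerivJ q ⇑(Dtri (k := k) (C := C) d) ∧
        ∀ rs : ZMod 2 × ZMod 2, ∀ x ∈ Jgrade k C rs,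
          Dtri (k := k) (C := C) d x ∈ Jgrade k C (((0:ZMod 2), (0:ZMod 2)) + rs))) ∧
    (∀ d d' : Fin 3 → Module.End k C,
      Dtri (k := k) (C := C) (d + d') = Dtri (k := k) (C := C) d + Dtri (k := k) (C := C) d') ∧
    (∀ (c : k) (d : Fin 3 → Module.End k C),
      Dtri (k := k) (C := C) (c • d) = c • Dtri (k := k) (C := C) d) ∧
    (∀ d d' : Fin 3 → Module.End k C, IsTri q d → IsTri q d' →
      Dtri (k := k) (C := C) d = Dtri (k := k) (C := C) d' → d = d') ∧
    (∀ d d' : Fin 3 → Module.End k C, IsTri q d → IsTri q d' →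
      Dtri (k := k) (C := C) (fun i => ⁅d i, d' i⁆) = ⁅Dtri (k := k) (C := C) d, Dtri (k := k) (C := C) d'⁆) ∧
    (∀ D : Module.End k (Jtype k C),
      IsDerivJ q ⇑D →
      (∀ rs : ZMod 2 × ZMod 2, ∀ x ∈ Jgrade k C rs,
        D x ∈ Jgrade k C (((0:ZMod 2), (0:ZMod 2)) + rs)) →
      ∃ d : Fin 3 → Module.End k C, IsTri q d ∧ Dtri (k := k) (C := C) d = D) := by
  have h00 : ∀ rs : ZMod 2 × ZMod 2, (((0:ZMod 2),(0:ZMod 2)) + rs) = rs := by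
    intro rs; obtain ⟨r,s⟩ := rs; simp
  refine ⟨?_, ?_, ?_, ?_, ?_, ?_⟩
  · -- part 1: derivation and degree (0,0)
    intro d hd
    have hcyc := tri_cyc' q hcomp hreg d hd
    constructor
    · intro x y
      refine Prod.ext (funext fun j => ?_) (funext fun i => ?_)
      · simp only [Dtri_apply', jmul, Prod.fst_add, Pi.add_apply, Pi.zero_apply]
        linear_combination
          (-2 : k) * hd.1 (j+1) (x.2 (j+1)) (y.2 (j+1))
          - 2 * hd.1 (j+2) (x.2 (j+2)) (y.2 (j+2))
      · simp only [Dtri_apply', jmul, Prod.snd_add, Pi.add_apply, Pi.zero_apply,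
          add_zero, mul_zero, zero_smul, zero_add, map_add, map_smul]
        rw [hcyc i (x.2 (i+1)) (y.2 (i+2)), hcyc i (y.2 (i+1)) (x.2 (i+2))]
        abel
    · intro rs x hx
      rw [h00]
      unfold Jgrade at hx ⊢
      split_ifs at hx ⊢ <;>
        rw [Submodule.mem_prod] at hx ⊢
      · obtain ⟨-, hx2⟩ := hx
        rw [Submodule.mem_bot] at hx2 ⊢
        refine ⟨Submodule.mem_top, ?_⟩
        show (fun i => d i (x.2 i)) = 0
        funext i; rw [hx2]; simp
      all_goals {
        obtain ⟨-, hx2⟩ := hx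
        refine ⟨(Submodule.mem_bot k).mpr rfl, ?_⟩
        intro j hj
        show d j (x.2 j) = 0
        rw [hx2 j hj, map_zero] }
  · -- additivity
    intro d d'
    apply LinearMap.ext; intro x
    refine Prod.ext ?_ (funext fun i => ?_) <;>
      simp [Dtri_apply']
  · -- smul
    intro c d
    apply LinearMap.ext; intro x
    refine Prod.ext ?_ (funext fun i => ?_) <;>
      simp [Dtri_apply']
  · -- injectivity
    intro d d' _ _ h
    funext i
    apply LinearMap.ext; intro a
    have h2 := LinearMap.congr_fun h (iot i a)
    have h3 := congrFun (congrArg Prod.snd h2) i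
    simpa [Dtri_apply', iot, Pi.single_eq_same] using h3
  · -- brackets
    intro d d' _ _
    apply LinearMap.ext; intro x
    refine Prod.ext ?_ (funext fun i => ?_) <;>
      simp [Dtri_apply', Ring.lie_def, Module.End.mul_apply, Prod.fst_sub, Prod.snd_sub, Pi.sub_apply]
  · -- surjectivity
    intro D hD hgr
    have hgr' : ∀ rs, ∀ x ∈ Jgrade k C rs, D x ∈ Jgrade k C rs := by
      intro rs x hx
      have := hgr rs x hx
      rwa [h00] at this
    -- D of diagonal elements has zero second component
    have hdiag2 : ∀ v : Fin 3 → k, (D ((v, 0) : Jtype k C)).2 = 0 := by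
      intro v
      have hx : ((v, 0) : Jtype k C) ∈ Jgrade k C (0,0) := by
        unfold Jgrade
        rw [if_pos rfl, Submodule.mem_prod]
        exact ⟨Submodule.mem_top, (Submodule.mem_bot k).mpr rfl⟩
      have h2 := hgr' _ _ hx
      unfold Jgrade at h2
      rw [if_pos rfl, Submodule.mem_prod] at h2
      exact (Submodule.mem_bot k).mp h2.2
    have hDee : ∀ j, D (ee j) = (0 : Jtype k C) := by
      intro j
      have hsnd : (D (ee j)).2 = 0 := hdiag2 (Pi.single j 1)
      have hde := hD (ee j) (ee j)
      rw [jmul_ee_self' q] at hde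
      refine Prod.ext (funext fun l => ?_) ?_
      · have h1 := congrFun (congrArg Prod.fst hde) l
        simp only [jmul, ee, Prod.fst_add, Pi.add_apply, hsnd, Pi.zero_apply,
          bp_zero_left', bp_zero_right', mul_zero, add_zero, Pi.single_apply] at h1
        show (D ((Pi.single j 1, 0) : Jtype k C)).1 l = 0
        rcases eq_or_ne l j with h | h
        · rw [if_pos h, mul_one, one_mul] at h1
          linear_combination -h1
        · rw [if_neg h, mul_zero, zero_mul, add_zero] at h1
          exact h1
      · exact hsnd
    -- shared facts
    have hkey : ∀ (z : Jtype k C) (i : Fin 3), z.1 = 0 → (∀ j, j ≠ i → z.2 j = 0) →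
        z = iot i (z.2 i) := by
      intro z i h1 h2
      refine Prod.ext ?_ (funext fun j => ?_)
      · rw [h1]; rfl
      · rcases eq_or_ne j i with h | h
        · subst h; simp [iot, Pi.single_eq_same]
        · rw [h2 j h]; simp [iot, Pi.single_eq_of_ne h]
    have hDiot : ∀ (i : Fin 3) (a : C), D (iot i a) = iot i ((D (iot i a)).2 i) := by
      intro i a
      fin_cases i
      · have hm : (iot 0 a : Jtype k C) ∈ Jgrade k C (1,0) := by
          unfold Jgrade
          rw [if_neg (by decide), if_pos rfl, Submodule.mem_prod]
          exact ⟨(Submodule.mem_bot k).mpr rfl, fun j hj => by simp [iot, Pi.single_eq_of_ne hj]⟩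
        have h2 := hgr' _ _ hm
        unfold Jgrade at h2
        rw [if_neg (by decide), if_pos rfl, Submodule.mem_prod] at h2
        exact hkey _ _ ((Submodule.mem_bot k).mp h2.1) h2.2
      · have hm : (iot 1 a : Jtype k C) ∈ Jgrade k C (0,1) := by
          unfold Jgrade
          rw [if_neg (by decide), if_neg (by decide), if_pos rfl, Submodule.mem_prod]
          exact ⟨(Submodule.mem_bot k).mpr rfl, fun j hj => by simp [iot, Pi.single_eq_of_ne hj]⟩
        have h2 := hgr' _ _ hm
        unfold Jgrade at h2
        rw [if_neg (by decide), if_neg (by decide), if_pos rfl, Submodule.mem_prod] at h2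
        exact hkey _ _ ((Submodule.mem_bot k).mp h2.1) h2.2
      · have hm : (iot 2 a : Jtype k C) ∈ Jgrade k C (1,1) := by
          unfold Jgrade
          rw [if_neg (by decide), if_neg (by decide), if_neg (by decide), Submodule.mem_prod]
          exact ⟨(Submodule.mem_bot k).mpr rfl, fun j hj => by simp [iot, Pi.single_eq_of_ne hj]⟩
        have h2 := hgr' _ _ hm
        unfold Jgrade at h2
        rw [if_neg (by decide), if_neg (by decide), if_neg (by decide), Submodule.mem_prod] at h2
        exact hkey _ _ ((Submodule.mem_bot k).mp h2.1) h2.2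
    -- the candidate triple
    refine ⟨fun i =>
      { toFun := fun a => (D (iot i a)).2 i
        map_add' := by
          intro a b
          show (D (iot i (a + b))).2 i = (D (iot i a)).2 i + (D (iot i b)).2 i
          rw [iot_add', map_add, Prod.snd_add, Pi.add_apply]
        map_smul' := by
          intro c a
          show (D (iot i (c • a))).2 i = c • (D (iot i a)).2 i
          rw [iot_smul', map_smul]; rfl }, ?_, ?_⟩
    case _ =>
      -- IsTri
      refine ⟨?_, ?_⟩
      · intro i x y
        have h := hD (iot i x) (iot i y)
        rw [jmul_iot_same' q, hDiot i x, hDiot i y, jmul_iot_same' q, jmul_iot_same' q] at h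
        have hL : D ((2 * bp q x y) • (ee (i+1) + ee (i+2) : Jtype k C)) = 0 := by
          rw [map_smul, map_add, hDee, hDee]; simp
        rw [hL] at h
        have hne : (i + 1 : Fin 3) ≠ i + 2 := by
          intro hcon
          exact absurd (add_left_cancel hcon) (by decide)
        have h1 := congrFun (congrArg Prod.fst h) (i+1)
        simp only [ee, Prod.fst_add, Prod.smul_fst, Prod.fst_zero, Pi.add_apply,
          Pi.smul_apply, smul_eq_mul, Pi.zero_apply, Pi.single_eq_same,
          Pi.single_eq_of_ne hne, add_zero, mul_one] at h1
        show bp q ((D (iot i x)).2 i) y + bp q x ((D (iot i y)).2 i) = 0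
        have h2 : (2:k) * (bp q ((D (iot i x)).2 i) y + bp q x ((D (iot i y)).2 i)) = 0 := by
          linear_combination -h1
        exact (mul_eq_zero.mp h2).resolve_left hchar
      · intro x y
        have h := hD (iot 1 x) (iot 2 y)
        rw [jmul_iot12' q, hDiot 0 (pmul q x y), hDiot 1 x, hDiot 2 y,
          jmul_iot12' q, jmul_iot12' q] at h
        have h0 := congrFun (congrArg Prod.snd h) 0
        simp only [iot, Prod.snd_add, Pi.add_apply, Pi.single_eq_same] at h0
        exact h0
    case _ =>
      -- Dtri d = D
      apply LinearMap.ext; intro x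
      have hx : D x = iot 0 ((D (iot 0 (x.2 0))).2 0) + iot 1 ((D (iot 1 (x.2 1))).2 1)
          + iot 2 ((D (iot 2 (x.2 2))).2 2) := by
        conv_lhs =>
          rw [decomp' x, map_add, map_add, map_add, map_add, map_add,
            map_smul, map_smul, map_smul, hDee, hDee, hDee,
            hDiot 0 (x.2 0), hDiot 1 (x.2 1), hDiot 2 (x.2 2)]
        simp
      rw [hx]
      refine Prod.ext ?_ (funext fun m => ?_)
      · show (0 : Fin 3 → k) = _
        simp [iot]
      · show (D (iot m (x.2 m))).2 m = _
        fin_cases m <;> simp [iot, Pi.single_apply]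
end

section
/- Let C be a Hurwitz algebra over a field k of characteristic ≠ 2, S the associated para-Hurwitz algebra and J = H₃(C,*). Then for all a,b ∈ S, the commutator of inner derivations [D₀(a), D₁(b)] equals D₂(a • b), and more generally [D_i(a), D_{i+1}(b)] = D_{i+2}(a • b) for i = 0,1,2 (indices mod 3). -/
noncomputable section

variable {k : Type*} [Field k] {C : Type*} [NonAssocRing C] [Module k C]
  [SMulCommClass k C C] [IsScalarTower k C C]

/-- `L_x`, the multiplication operator `y ↦ x ∘ y` on `J`. -/
def Lmul (q : QuadraticForm k C) (x : Jtype k C) : Jtype k C → Jtype k C :=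
  fun y => jmul q x y

/-- The commutator of two maps `J → J`. -/
def brkt (f g : Jtype k C → Jtype k C) : Jtype k C → Jtype k C :=
  fun y => f (g y) - g (f y)

/-- The inner derivation `D_i(a) = 2[L_{ι_i(a)}, L_{e_{i+1}}]` of `J`. -/
def Dfun (q : QuadraticForm k C) (i : Fin 3) (a : C) : Jtype k C → Jtype k C :=
  fun y => (2:k) • brkt (Lmul q (iot i a)) (Lmul q (ee (i+1))) y

/-- The degree of `ι_i(S)` in the `ℤ₂ × ℤ₂`-grading of `J`. -/
def gidx : Fin 3 → ZMod 2 × ZMod 2 := ![(1,0), (0,1), (1,1)]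

end


set_option linter.unusedSectionVars false

noncomputable section HurwHelpers

variable {k : Type*} [Field k] {C : Type*} [NonAssocRing C] [Module k C]
  [SMulCommClass k C C] [IsScalarTower k C C]

namespace Hurw

open QuadraticMap

variable (q : QuadraticForm k C)

lemma conj_add (x y : C) : conj q (x + y) = conj q x + conj q y := by
  simp only [conj, bp, polar_add_left, add_smul]; abel

lemma conj_smul (t : k) (x : C) : conj q (t • x) = t • conj q x := by
  simp only [conj, bp, polar_smul_left, smul_eq_mul, smul_sub, smul_smul]

lemma conj_zero : conj q (0 : C) = 0 := by
  simp [conj, bp, polar_zero_left]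

lemma conj_neg (x : C) : conj q (-x) = - conj q x := by
  have := conj_smul q (-1) x
  simpa using this

lemma conj_sub (x y : C) : conj q (x - y) = conj q x - conj q y := by
  rw [sub_eq_add_neg, conj_add, conj_neg, sub_eq_add_neg]

lemma pmul_add_left (x y z : C) : pmul q (x + y) z = pmul q x z + pmul q y z := by
  simp [pmul, conj_add, add_mul]

lemma pmul_add_right (x y z : C) : pmul q x (y + z) = pmul q x y + pmul q x z := by
  simp [pmul, conj_add, mul_add]

lemma pmul_smul_left (t : k) (x z : C) : pmul q (t • x) z = t • pmul q x z := by
  simp [pmul, conj_smul, smul_mul_assoc]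

lemma pmul_smul_right (t : k) (x z : C) : pmul q x (t • z) = t • pmul q x z := by
  simp [pmul, conj_smul, mul_smul_comm]

lemma pmul_zero_left (z : C) : pmul q 0 z = 0 := by simp [pmul, conj_zero]

lemma pmul_zero_right (z : C) : pmul q z 0 = 0 := by simp [pmul, conj_zero]

lemma pmul_neg_left (x z : C) : pmul q (-x) z = - pmul q x z := by
  simp [pmul, conj_neg]

lemma pmul_neg_right (x z : C) : pmul q x (-z) = - pmul q x z := by
  simp [pmul, conj_neg]

variable (hcomp : ∀ x y : C, q (x * y) = q x * q y)
include hcomp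

lemma L1 (x y z : C) : polar q (x * y) (z * y) = polar q x z * q y := by
  have h := hcomp (x + z) y
  rw [add_mul] at h
  simp only [polar]
  rw [h, hcomp, hcomp]; ring

lemma L2 (x y w : C) : polar q (x * y) (x * w) = q x * polar q y w := by
  have h := hcomp x (y + w)
  rw [mul_add] at h
  simp only [polar]
  rw [h, hcomp, hcomp]; ring

lemma L3 (x y z w : C) :
    polar q (x * y) (z * w) + polar q (z * y) (x * w) = polar q x z * polar q y w := by
  have h1 := L1 q hcomp x (y + w) z
  rw [mul_add, mul_add, polar_add_left, polar_add_right, polar_add_right,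
    QuadraticMap.map_add (⇑q) y w] at h1
  have h2 := L1 q hcomp x y z
  have h3 := L1 q hcomp x w z
  have h4 : polar q (x * w) (z * y) = polar q (z * y) (x * w) := polar_comm _ _ _
  linear_combination h1 - h2 - h3 - h4

lemma s1 (x y z : C) :
    polar q (x * y) z + polar q (z * y) x = polar q x z * polar q y 1 := by
  have := L3 q hcomp x y z 1
  simpa using this

lemma s2 (x y z : C) :
    polar q y (z * x) + polar q (z * y) x = polar q z 1 * polar q y x := by
  have h := L3 q hcomp 1 y z x
  rw [one_mul, one_mul] at h
  have hc : polar (⇑q) 1 z = polar (⇑q) z 1 := polar_comm _ _ _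
  linear_combination h + polar (⇑q) y x * hc

lemma pA' (x w z : C) : polar q (conj q x * w) z = polar q w (x * z) := by
  have e : conj q x * w = polar q x 1 • w - x * w := by
    simp [conj, bp, sub_mul, smul_mul_assoc]
  rw [e, polar_sub_left, polar_smul_left, smul_eq_mul]
  have h := s2 q hcomp z w x
  linear_combination -h

lemma pB' (x w z : C) : polar q (w * conj q x) z = polar q w (z * x) := by
  have e : w * conj q x = polar q x 1 • w - w * x := by
    simp [conj, bp, mul_sub, mul_smul_comm]
  rw [e, polar_sub_left, polar_smul_left, smul_eq_mul]
  have h := s1 q hcomp w x z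
  have hc := polar_comm (⇑q) w (z * x)
  linear_combination -h - hc

lemma Tmul (x y : C) :
    polar q (x * y) 1 = polar q x 1 * polar q y 1 - polar q x y := by
  have h := s1 q hcomp x y 1
  rw [one_mul] at h
  have hc := polar_comm (⇑q) y x
  linear_combination h - hc

lemma pconj (x u : C) :
    polar q (conj q x) u = polar q x 1 * polar q 1 u - polar q x u := by
  simp [conj, bp, polar_sub_left, polar_smul_left, smul_eq_mul]

variable (hreg : ∀ x : C, (∀ y, QuadraticMap.polar q x y = 0) → x = 0)
include hreg

lemma lkey4 (a b c : C) :
    conj q b * (c * a) + conj q c * (b * a) = polar q b c • a := by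
  rw [← sub_eq_zero]
  apply hreg
  intro z
  rw [polar_sub_left, polar_add_left, polar_smul_left, pA' q hcomp, pA' q hcomp]
  have h := L3 q hcomp c a b z
  have hc := polar_comm (⇑q) c b
  rw [smul_eq_mul]
  linear_combination h + polar (⇑q) a z * hc

lemma lkey5 (a b c : C) :
    (b * c) * conj q a + (b * a) * conj q c = polar q a c • b := by
  rw [← sub_eq_zero]
  apply hreg
  intro z
  rw [polar_sub_left, polar_add_left, polar_smul_left, pB' q hcomp, pB' q hcomp]
  have h := L3 q hcomp b c z a
  have hc1 := polar_comm (⇑q) (b * a) (z * c)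
  have hc2 := polar_comm (⇑q) b z
  have hc3 := polar_comm (⇑q) c a
  rw [smul_eq_mul]
  linear_combination h + hc1 + polar (⇑q) b z * hc3

lemma Mlem (x y : C) :
    x * y + y * x = polar q x 1 • y + polar q y 1 • x - polar q x y • (1:C) := by
  rw [← sub_eq_zero]
  apply hreg
  intro z
  simp only [polar_sub_left, polar_add_left, polar_smul_left, smul_eq_mul]
  have e1 := s2 q hcomp y z x
  have e2 := s2 q hcomp x z y
  have e3 := s1 q hcomp x z y
  have c1 := polar_comm (⇑q) (x*y) z
  have c2 := polar_comm (⇑q) (y*x) z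
  have c3 := polar_comm (⇑q) y z
  have c4 := polar_comm (⇑q) x z
  have c5 := polar_comm (⇑q) (1:C) z
  linear_combination e1 + e2 - e3 + c1 + c2 - polar (⇑q) x 1 * c3 - polar (⇑q) y 1 * c4 + polar (⇑q) x y * c5

omit hreg in
lemma lkey_s1 (a b c : C) : polar q (pmul q a b) c = polar q b (pmul q c a) := by
  rw [pmul, pmul, pA' q hcomp, polar_comm (⇑q) b _, pA' q hcomp,
    pconj q hcomp, pconj q hcomp]
  have hc1 := polar_comm (⇑q) (1:C) (a*c)
  have ht1 := Tmul q hcomp a c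
  have hc2 := polar_comm (⇑q) (1:C) (c*b)
  have ht2 := Tmul q hcomp c b
  have hA := s2 q hcomp c b a
  have hC := s1 q hcomp a b c
  have hd1 := polar_comm (⇑q) (c*b) a
  have hcm := polar_comm (⇑q) b c
  linear_combination polar (⇑q) b 1 * hc1 + polar (⇑q) b 1 * ht1 - polar (⇑q) a 1 * hc2 - polar (⇑q) a 1 * ht2 - hA + hC - hd1 - polar (⇑q) a 1 * hcm

omit hreg in
lemma lkey_s2 (a b c : C) : polar q (pmul q a b) c = polar q a (pmul q b c) := by
  rw [pmul, pmul, pA' q hcomp, polar_comm (⇑q) a _, pA' q hcomp,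
    pconj q hcomp, pconj q hcomp]
  have hc1 := polar_comm (⇑q) (1:C) (a*c)
  have ht1 := Tmul q hcomp a c
  have hc2 := polar_comm (⇑q) (1:C) (b*a)
  have ht2 := Tmul q hcomp b a
  have hA := s2 q hcomp c b a
  have hB := s2 q hcomp a c b
  have hC := s1 q hcomp a b c
  have hD := s1 q hcomp b c a
  have c1 := polar_comm (⇑q) b a
  have c2 := polar_comm (⇑q) c a
  have c3 := polar_comm (⇑q) b c
  have c4 := polar_comm (⇑q) (c*b) a
  have c5 := polar_comm (⇑q) (a*c) b
  linear_combination polar (⇑q) b 1 * hc1 + polar (⇑q) b 1 * ht1 - polar (⇑q) c 1 * hc2 - polar (⇑q) c 1 * ht2 + hB - hD + polar (⇑q) b 1 * c2 + c5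

omit hreg in
lemma T1 : polar q (1:C) 1 = 2 * q 1 := by
  have h2 : (1:C) + 1 = (2:k) • (1:C) := by rw [two_smul]
  rw [polar, h2, QuadraticMap.map_smul, smul_eq_mul]
  ring

lemma CC (h1 : q 1 = 1) (x y : C) : conj q (conj q x * conj q y) = y * x := by
  have e1 : conj q x * conj q y
      = (polar q x 1 * polar q y 1) • (1:C) - polar q x 1 • y - polar q y 1 • x + x * y := by
    simp only [conj, bp, sub_mul, mul_sub, smul_mul_assoc, mul_smul_comm, one_mul, mul_one,
      smul_smul, smul_sub, smul_add]
    module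
  have e2 : polar q (conj q x * conj q y) 1
      = polar q x 1 * polar q y 1 - polar q x y := by
    rw [e1]
    simp only [polar_add_left, polar_sub_left, polar_smul_left, smul_eq_mul,
      T1 q hcomp, h1, Tmul q hcomp]
    ring
  have m := Mlem q hcomp hreg x y
  rw [conj, bp, e2, e1]
  have my : y * x = polar q x 1 • y + polar q y 1 • x - polar q x y • (1:C) - x * y := by
    rw [← m]; abel
  rw [my]
  module

lemma lkeyV1 (h1 : q 1 = 1) (a b c : C) :
    pmul q c (pmul q a b) + pmul q b (pmul q a c) = polar q b c • a := by
  show conj q c * conj q (conj q a * conj q b) + conj q b * conj q (conj q a * conj q c) = _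
  rw [CC q hcomp hreg h1, CC q hcomp hreg h1]
  have h := lkey4 q hcomp hreg a c b
  have hc : polar (⇑q) c b = polar (⇑q) b c := polar_comm _ _ _
  rw [← hc]
  linear_combination (norm := module) h

lemma lkeyV2 (h1 : q 1 = 1) (a b c : C) :
    pmul q (pmul q a b) c + pmul q (pmul q c b) a = polar q a c • b := by
  show conj q (conj q a * conj q b) * conj q c + conj q (conj q c * conj q b) * conj q a = _
  rw [CC q hcomp hreg h1, CC q hcomp hreg h1]
  linear_combination (norm := module) lkey5 q hcomp hreg a b c

lemma dich : q 1 = 1 ∨ ∀ x : C, x = 0 := by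
  by_cases h1 : q 1 = 1
  · exact Or.inl h1
  · right
    have h := hcomp 1 1
    rw [one_mul] at h
    have h0 : q 1 = 0 := by
      have hz : q 1 * (q 1 - 1) = 0 := by linear_combination -h
      rcases mul_eq_zero.mp hz with h' | h'
      · exact h'
      · exact absurd (sub_eq_zero.mp h') h1
    have hq : ∀ y : C, q y = 0 := by
      intro y
      have := hcomp y 1
      rw [mul_one, h0, mul_zero] at this
      exact this
    intro x
    apply hreg
    intro y
    rw [polar, hq, hq, hq]
    ring


set_option maxHeartbeats 1000000 in
omit hcomp hreg in
lemma Dfun_apply (hchar : (2:k) ≠ 0) (i : Fin 3) (a : C) (y : Jtype k C) :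
    Dfun q i a y =
      (Pi.single (i+1) (-(2 * bp q a (y.2 i))) + Pi.single (i+2) (2 * bp q a (y.2 i)),
       Pi.single i (((2:k)⁻¹ * (y.1 (i+1) - y.1 (i+2))) • a)
         + Pi.single (i+1) (pmul q (y.2 (i+2)) a)
         + Pi.single (i+2) (-(pmul q a (y.2 (i+1))))) := by
  have h4 : (4:k) ≠ 0 := by
    rw [show (4:k) = 2*2 by norm_num]; exact mul_ne_zero hchar hchar
  have hfin : ∀ m : Fin 3, m = 0 ∨ m = 1 ∨ m = 2 := by decide
  refine Prod.ext ?_ ?_ <;> funext j <;>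
    rcases hfin i with rfl | rfl | rfl <;> rcases hfin j with rfl | rfl | rfl <;>
    · simp [Dfun, brkt, Lmul, jmul, iot, ee, bp, Pi.single_apply, pmul_zero_left,
        pmul_zero_right, polar_zero_left, polar_zero_right, smul_smul,
        polar_smul_right, polar_add_right, pmul_smul_left, pmul_smul_right, pmul_add_left,
        pmul_add_right, smul_sub, smul_add]
      try generalize y.1 0 = l0
      try generalize y.1 1 = l1
      try generalize y.1 2 = l2
      try (field_simp; try ring)
      try (match_scalars <;> (field_simp; try ring))
      try simp

end Hurw

end HurwHelpers

set_option maxHeartbeats 2000000 in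
/-- `[D_i(a), D_{i+1}(b)] = D_{i+2}(a • b)` for `i = 0,1,2` (mod 3);
in particular `[D₀(a), D₁(b)] = D₂(a • b)`. -/
theorem stmt_11 {k : Type*} [Field k] {C : Type*} [NonAssocRing C] [Module k C]
    [SMulCommClass k C C] [IsScalarTower k C C]
    (hchar : (2 : k) ≠ 0)
    (q : QuadraticForm k C)
    (hcomp : ∀ x y : C, q (x * y) = q x * q y)
    (hreg : ∀ x : C, (∀ y, QuadraticMap.polar q x y = 0) → x = 0) :
    (∀ a b : C, brkt (Dfun q 0 a) (Dfun q 1 b) = Dfun q 2 (pmul q a b)) ∧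
    (∀ (i : Fin 3) (a b : C),
      brkt (Dfun q i a) (Dfun q (i+1) b) = Dfun q (i+2) (pmul q a b)) := by
  classical
  have main : ∀ (i : Fin 3) (a b : C),
      brkt (Dfun q i a) (Dfun q (i+1) b) = Dfun q (i+2) (pmul q a b) := by
    intro i a b
    have h4 : (4:k) ≠ 0 := by
      rw [show (4:k) = 2*2 by norm_num]; exact mul_ne_zero hchar hchar
    have hfin : ∀ m : Fin 3, m = 0 ∨ m = 1 ∨ m = 2 := by decide
    have h2c : ∀ t : k, (2:k)⁻¹ * (2 * t) = t := by
      intro t; field_simp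
    rcases Hurw.dich q hcomp hreg with h1 | hz
    · -- nondegenerate case
      have hV1 : ∀ c : C, pmul q c (pmul q a b)
          = QuadraticMap.polar q b c • a - pmul q b (pmul q a c) := by
        intro c
        have := Hurw.lkeyV1 q hcomp hreg h1 a b c
        linear_combination (norm := module) this
      have hV2 : ∀ c : C, pmul q (pmul q a b) c
          = QuadraticMap.polar q a c • b - pmul q (pmul q c b) a := by
        intro c
        have := Hurw.lkeyV2 q hcomp hreg h1 a b c
        linear_combination (norm := module) this
      have hS2 : ∀ c : C, QuadraticMap.polar q (pmul q a b) c
          = QuadraticMap.polar q a (pmul q b c) :=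
        fun c => Hurw.lkey_s2 q hcomp a b c
      have hS3 : ∀ c : C, QuadraticMap.polar q b (pmul q c a)
          = QuadraticMap.polar q a (pmul q b c) :=
        fun c => (Hurw.lkey_s1 q hcomp a b c).symm.trans (Hurw.lkey_s2 q hcomp a b c)
      funext y
      show Dfun q i a (Dfun q (i+1) b y) - Dfun q (i+1) b (Dfun q i a y)
          = Dfun q (i+2) (pmul q a b) y
      simp only [Hurw.Dfun_apply q hchar]
      rcases hfin i with rfl | rfl | rfl <;>
        refine Prod.ext ?_ ?_ <;> funext j <;> rcases hfin j with rfl | rfl | rfl <;>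
        · simp [bp, Pi.single_apply, QuadraticMap.polar_add_right,
            QuadraticMap.polar_smul_right, QuadraticMap.polar_neg_right,
            QuadraticMap.polar_zero_right, Hurw.pmul_add_right, Hurw.pmul_smul_right,
            Hurw.pmul_neg_right, Hurw.pmul_zero_right, Hurw.pmul_add_left,
            Hurw.pmul_smul_left, Hurw.pmul_neg_left, Hurw.pmul_zero_left,
            smul_smul, smul_sub, smul_add, h2c, hS2, hS3, hV1, hV2]
          try module
          try (generalize y.1 0 = l0; generalize y.1 1 = l1; generalize y.1 2 = l2;
               field_simp; try ring)
    · -- degenerate case: C is trivial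
      have hbp : ∀ u v : C, bp q u v = 0 := by
        intro u v
        rw [bp, hz u, QuadraticMap.polar_zero_left]
      funext y
      show Dfun q i a (Dfun q (i+1) b y) - Dfun q (i+1) b (Dfun q i a y)
          = Dfun q (i+2) (pmul q a b) y
      simp only [Hurw.Dfun_apply q hchar]
      refine Prod.ext ?_ ?_
      · funext j
        simp [hbp, Pi.single_apply, ite_self]
      · funext j
        exact (hz _).trans (hz _).symm
  refine ⟨?_, main⟩
  intro a b
  have := main 0 a b
  simpa using this
end
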